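/- arXiv:1612.07591 — 2 statements merged into one kernel-verified Lean document; each statement's English description precedes it below -/
import Mathlib

section
/- K(x) - (xq/(1-xq))·K(xq) = H(xq), where K(x) = Σ_{n≥0} x^n q^{C(n+1,2)} / (xq;q)_n · Σ_{k=0}^{n} (-1)^k/(q;q)_k and H(x) = Σ_{n≥0} (-x)^n q^{C(n,2)} / ((q;q)_n (x;q)_n). -/
/-! Both `K(x)` and `H(xq)` are sums `∑ₙ cₙ xⁿ / (xq;q)ₙ`. Their numerators `kₙ` and `qⁿhₙ` satisfy
`k₀ = h₀` and `kₙ₊₁ - qⁿ⁺¹hₙ₊₁ = qⁿ⁺¹kₙ`, so `K(x) - H(xq) = ∑ₙ qⁿ⁺¹kₙ xⁿ⁺¹ / (xq;q)ₙ₊₁`.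
As `(xq;q)ₙ₊₁ = (1 - xq)(xq²;q)ₙ`, multiplying by `1 - xq` turns this into `xq · K(xq)`. -/

open PowerSeries

noncomputable section
namespace FC

/-- The field `ℚ(q)` of rational functions in `q`. -/
abbrev K : Type := RatFunc ℚ

/-- The variable `q`. -/
def q : K := RatFunc.X

/-- The q-Pochhammer symbol `(a; q)_n = ∏_{i=0}^{n-1} (1 - a q^i)`. -/
def poch (a : K) (n : ℕ) : K := ∏ i ∈ Finset.range n, (1 - a * q ^ i)

/-- The power series `(x q^s; q)_n = ∏_{i=0}^{n-1} (1 - q^{s+i} x)` in the variable `x`. -/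
def pochX (s n : ℕ) : PowerSeries K :=
  ∏ i ∈ Finset.range n, (1 - PowerSeries.C (q ^ (s + i)) * PowerSeries.X)

/-- `J(x) = Σ_{n≥0} (-x)^n q^{C(n,2)} / ((q;q)_n (xq;q)_n)`, defined coefficientwise:
the coefficient of `x^N` is `Σ_{n=0}^{N} (-1)^n q^{C(n,2)}/(q;q)_n · [x^{N-n}] (xq;q)_n⁻¹`. -/
def J : PowerSeries K :=
  PowerSeries.mk fun N => ∑ n ∈ Finset.range (N + 1),
    ((-1 : K) ^ n * q ^ n.choose 2 / poch q n) * PowerSeries.coeff (N - n) (pochX 1 n)⁻¹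

/-- `H(x) = Σ_{n≥0} (-x)^n q^{C(n,2)} / ((q;q)_n (x;q)_n)`. -/
def H : PowerSeries K :=
  PowerSeries.mk fun N => ∑ n ∈ Finset.range (N + 1),
    ((-1 : K) ^ n * q ^ n.choose 2 / poch q n) * PowerSeries.coeff (N - n) (pochX 0 n)⁻¹

/-- `K(x) = Σ_{n≥0} (x^n q^{n(n+1)/2} / (xq;q)_n) · Σ_{k=0}^n (-1)^k/(q;q)_k`. -/
def Kq : PowerSeries K :=
  PowerSeries.mk fun N => ∑ n ∈ Finset.range (N + 1),
    (q ^ (n * (n + 1) / 2) * ∑ k ∈ Finset.range (n + 1), (-1 : K) ^ k / poch q k) *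
      PowerSeries.coeff (N - n) (pochX 1 n)⁻¹

section XSum

variable {R : Type*} [CommRing R]

-- `xSum c f = ∑ₙ c n • Xⁿ * f n`, an `X`-adically convergent sum, given by its coefficients.
def xSum (c : ℕ → R) (f : ℕ → R⟦X⟧) : R⟦X⟧ :=
  mk fun N => ∑ n ∈ Finset.range (N + 1), c n * coeff (N - n) (f n)

variable (c d : ℕ → R) (f : ℕ → R⟦X⟧)

lemma coeff_xSum (N : ℕ) :
    coeff N (xSum c f) = ∑ n ∈ Finset.range (N + 1), c n * coeff (N - n) (f n) :=
  coeff_mk _ _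

lemma xSum_sub : xSum (fun n => c n - d n) f = xSum c f - xSum d f := by
  ext N
  simp only [coeff_xSum, map_sub, sub_mul, Finset.sum_sub_distrib]

lemma xSum_const_mul (a : R) : xSum (fun n => a * c n) f = C a * xSum c f := by
  ext N
  simp only [coeff_xSum, coeff_C_mul, Finset.mul_sum, mul_assoc]

lemma rescale_xSum (a : R) :
    rescale a (xSum c f) = xSum (fun n => a ^ n * c n) (fun n => rescale a (f n)) := by
  ext N
  rw [coeff_rescale, coeff_xSum, coeff_xSum, Finset.mul_sum]
  refine Finset.sum_congr rfl fun n hn => ?_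
  rw [coeff_rescale, ← pow_sub_mul_pow a (Nat.le_of_lt_succ (Finset.mem_range.mp hn))]
  ring

lemma xSum_eq_X_mul (h : c 0 = 0) :
    xSum c f = X * xSum (fun n => c (n + 1)) (fun n => f (n + 1)) := by
  ext N
  rw [coeff_xSum, Finset.sum_range_succ', h, zero_mul, add_zero]
  cases N with
  | zero => simp
  | succ m =>
    rw [coeff_succ_X_mul, coeff_xSum]
    simp only [Nat.add_sub_add_right]

lemma coeff_xSum_eq_coeff_sum {j M : ℕ} (hj : j < M) :
    coeff j (xSum c f) = coeff j (∑ n ∈ Finset.range M, C (c n) * X ^ n * f n) := by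
  rw [coeff_xSum, map_sum]
  simp only [mul_assoc, coeff_C_mul, coeff_X_pow_mul', mul_ite, mul_zero]
  rw [← Finset.sum_filter]
  refine Finset.sum_congr ?_ fun _ _ => rfl
  ext n
  simp only [Finset.mem_range, Finset.mem_filter]
  omega

lemma mul_xSum (g : R⟦X⟧) : g * xSum c f = xSum c (fun n => g * f n) := by
  ext N
  have hf : ∀ p : ℕ × ℕ, p.1 + p.2 = N → coeff p.2 (xSum c f) =
      coeff p.2 (∑ n ∈ Finset.range (N + 1), C (c n) * X ^ n * f n) := fun p hp =>
    coeff_xSum_eq_coeff_sum c f (by omega)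
  rw [coeff_mul,
    Finset.sum_congr rfl fun p hp => by rw [hf p (Finset.HasAntidiagonal.mem_antidiagonal.mp hp)],
    ← coeff_mul, coeff_xSum_eq_coeff_sum c _ (Nat.lt_succ_self N), Finset.mul_sum]
  simp only [Nat.succ_eq_add_one, mul_left_comm g]

end XSum

lemma rescale_inv {k : Type*} [Field k] (a : k) (φ : k⟦X⟧) : rescale a φ⁻¹ = (rescale a φ)⁻¹ := by
  have hc : constantCoeff (rescale a φ) = constantCoeff φ := by
    rw [← coeff_zero_eq_constantCoeff_apply, coeff_rescale, pow_zero, one_mul,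
      coeff_zero_eq_constantCoeff_apply]
  by_cases h : constantCoeff φ = 0
  · rw [PowerSeries.inv_eq_zero.mpr h, PowerSeries.inv_eq_zero.mpr (hc.trans h), map_zero]
  · rw [eq_inv_iff_mul_eq_one (hc ▸ h), ← map_mul, PowerSeries.inv_mul_cancel _ h, map_one]

lemma rescale_C {R : Type*} [CommSemiring R] (a r : R) : rescale a (C r) = C r := by
  ext n
  cases n <;> simp [coeff_rescale, coeff_C]

lemma rescale_pochX (s n : ℕ) : rescale q (pochX s n) = pochX (s + 1) n := by
  rw [pochX, pochX, map_prod]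
  refine Finset.prod_congr rfl fun i _ => ?_
  rw [map_sub, map_one, map_mul, rescale_C, rescale_X, ← mul_assoc, ← map_mul, ← pow_succ,
    add_right_comm s 1]

lemma pochX_succ (s n : ℕ) : pochX s (n + 1) = (1 - C (q ^ s) * X) * pochX (s + 1) n := by
  rw [pochX, Finset.prod_range_succ', pochX, mul_comm, add_zero]
  simp only [add_assoc, add_comm 1]

lemma one_sub_mul_inv_pochX_succ (s n : ℕ) :
    (1 - C (q ^ s) * X) * (pochX s (n + 1))⁻¹ = (pochX (s + 1) n)⁻¹ := by
  rw [pochX_succ, PowerSeries.mul_inv_rev, mul_left_comm,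
    PowerSeries.mul_inv_cancel _ (by simp), mul_one]

def kCoeff (n : ℕ) : K :=
  q ^ (n * (n + 1) / 2) * ∑ k ∈ Finset.range (n + 1), (-1 : K) ^ k / poch q k

def hCoeff (n : ℕ) : K := (-1 : K) ^ n * q ^ n.choose 2 / poch q n

lemma kCoeff_succ (n : ℕ) : kCoeff (n + 1) = q ^ (n + 1) * (kCoeff n + hCoeff (n + 1)) := by
  have hexp : (n + 1) * (n + 1 + 1) / 2 = n * (n + 1) / 2 + (n + 1) := by
    rw [show (n + 1) * (n + 1 + 1) = n * (n + 1) + 2 * (n + 1) by ring]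
    omega
  have hchoose : (n + 1).choose 2 = n * (n + 1) / 2 := by
    rw [Nat.choose_two_right, Nat.add_sub_cancel, Nat.mul_comm]
  rw [kCoeff, kCoeff, hCoeff, Finset.sum_range_succ, hexp, hchoose, pow_add]
  ring

lemma Kq_eq_xSum : Kq = xSum kCoeff fun n => (pochX 1 n)⁻¹ := rfl

lemma H_eq_xSum : H = xSum hCoeff fun n => (pochX 0 n)⁻¹ := rfl

lemma rescale_Kq : rescale q Kq = xSum (fun n => q ^ n * kCoeff n) fun n => (pochX 2 n)⁻¹ := by
  simp only [Kq_eq_xSum, rescale_xSum, rescale_inv, rescale_pochX]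

lemma Kq_sub_rescale_H :
    Kq - rescale q H = X * xSum (fun n => q ^ (n + 1) * kCoeff n) fun n => (pochX 1 (n + 1))⁻¹ := by
  simp only [Kq_eq_xSum, H_eq_xSum, rescale_xSum, rescale_inv, rescale_pochX, ← xSum_sub]
  rw [xSum_eq_X_mul _ _ (by simp [kCoeff, hCoeff, poch])]
  congr 2 with n
  rw [kCoeff_succ]
  ring

lemma one_sub_mul_Kq_sub_rescale_H :
    (1 - C q * X) * (Kq - rescale q H) = X * C q * rescale q Kq := by
  have h : ∀ n, (1 - C q * X) * (pochX 1 (n + 1))⁻¹ = (pochX 2 n)⁻¹ := fun n => by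
    simpa only [pow_one] using one_sub_mul_inv_pochX_succ 1 n
  rw [Kq_sub_rescale_H, mul_left_comm, mul_xSum, rescale_Kq, mul_assoc, ← xSum_const_mul]
  simp only [h, pow_succ', mul_assoc]

/-- `K(x) - (xq/(1-xq))·K(xq) = H(xq)`. -/
theorem stmt5 :
    Kq - PowerSeries.X * PowerSeries.C q *
        (1 - PowerSeries.C q * PowerSeries.X)⁻¹ * rescale q Kq
      = rescale q H := by
  have hinv : (1 - C q * X)⁻¹ * (1 - C q * X) = 1 := PowerSeries.inv_mul_cancel _ (by simp)
  linear_combination (1 - C q * X)⁻¹ * one_sub_mul_Kq_sub_rescale_H - (Kq - rescale q H) * hinv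

end FC
end
end

section
/- With J-cal(x) = Σ_{n≥0} (-1)^{⌈n/2⌉} x^n q^{n(n-1)/2} / (q²;q²)_{⌊n/2⌋} and K-cal(x) = Σ_{n≥0} x^n q^{n(n+1)/2} Σ_{k=0}^{⌊n/2⌋} (-1)^k/(q²;q²)_k, one has K-cal(x) - xq·K-cal(xq) = (J-cal(x) - x·J-cal(xq))/(1-2x) = J-cal(x) + x·J-cal(-xq). -/
open PowerSeries

noncomputable section
namespace FC

/-- `(q²;q²)_m = ∏_{i=1}^{m} (1 - q^{2i})`. -/
def poch2 (m : ℕ) : K := ∏ i ∈ Finset.range m, (1 - q ^ (2 * (i + 1)))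

/-- `𝒥(x) = Σ_{n≥0} (-1)^{⌈n/2⌉} x^n q^{C(n,2)} / (q²;q²)_{⌊n/2⌋}`. -/
def Jcal : PowerSeries K :=
  PowerSeries.mk fun n => (-1 : K) ^ ((n + 1) / 2) * q ^ n.choose 2 / poch2 (n / 2)

/-- `𝒦(x) = Σ_{n≥0} x^n q^{n(n+1)/2} Σ_{k=0}^{⌊n/2⌋} (-1)^k/(q²;q²)_k`. -/
def Kcal : PowerSeries K :=
  PowerSeries.mk fun n =>
    q ^ (n * (n + 1) / 2) * ∑ k ∈ Finset.range (n / 2 + 1), (-1 : K) ^ k / poch2 k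

/-
The coefficients `J_n` of `𝒥` satisfy `J_{2m+1} = -q^{2m} J_{2m}` and
`(1 - q^{2m+2}) J_{2m+2} = q^{2m+1} J_{2m+1}`, so the coefficient of `x^{n+1}` in
`𝒥(x) + x 𝒥(-xq)` vanishes for even `n` and equals `q^{n+1} J_{n+1}` for odd `n`.
The partial sums in `𝒦` give the same coefficients for `𝒦(x) - xq 𝒦(xq)`, which proves the
second identity. The same two recurrences give `𝒥(xq) + 𝒥(-xq) = 2 (𝒥(x) + x 𝒥(-xq))`,
and multiplying `𝒥(x) + x 𝒥(-xq)` by `1 - 2x` then yields `𝒥(x) - x 𝒥(xq)`.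
-/

end FC

theorem pow_choose_two_succ {M : Type*} [Monoid M] (a : M) (n : ℕ) :
    a ^ (n + 1).choose 2 = a ^ n * a ^ n.choose 2 := by
  rw [Nat.choose_succ_succ', Nat.choose_one_right, pow_add]

theorem Nat.mul_succ_div_two_eq_choose (n : ℕ) : n * (n + 1) / 2 = (n + 1).choose 2 := by
  rw [Nat.choose_two_right, Nat.add_sub_cancel, Nat.mul_comm]

namespace PowerSeries

theorem ext_parity {R : Type*} [Semiring R] {f g : R⟦X⟧}
    (h_zero : coeff 0 f = coeff 0 g)
    (h_odd : ∀ m, coeff (2 * m + 1) f = coeff (2 * m + 1) g)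
    (h_even : ∀ m, coeff (2 * m + 2) f = coeff (2 * m + 2) g) : f = g := by
  ext n
  obtain ⟨m, rfl | rfl⟩ := Nat.even_or_odd' n
  · cases m with
    | zero => exact h_zero
    | succ m => exact h_even m
  · exact h_odd m

theorem coeff_succ_sub_X_mul_C_mul_rescale {R : Type*} [CommRing R] (f : R⟦X⟧)
    (a : R) (n : ℕ) :
    coeff (n + 1) (f - X * C a * rescale a f) = coeff (n + 1) f - a ^ (n + 1) * coeff n f := by
  rw [map_sub, mul_comm X, mul_assoc, coeff_C_mul, coeff_succ_X_mul, coeff_rescale, pow_succ']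
  ring

end PowerSeries

namespace FC

theorem one_sub_q_pow_ne_zero {i : ℕ} (hi : i ≠ 0) : (1 : K) - q ^ i ≠ 0 := by
  rw [sub_ne_zero, ne_comm, q, ← RatFunc.algebraMap_X, ← map_pow,
    ← map_one (algebraMap (Polynomial ℚ) K), (RatFunc.algebraMap_injective ℚ).ne_iff]
  intro h
  simpa [hi] using congrArg Polynomial.natDegree h

theorem poch2_ne_zero (m : ℕ) : poch2 m ≠ 0 :=
  Finset.prod_ne_zero_iff.2 fun _ _ => one_sub_q_pow_ne_zero (by positivity)

theorem poch2_succ (m : ℕ) : poch2 (m + 1) = poch2 m * (1 - q ^ (2 * m + 2)) :=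
  Finset.prod_range_succ _ _

theorem coeff_Jcal_two_mul_add_one (m : ℕ) :
    coeff (2 * m + 1) Jcal = -(q ^ (2 * m) * coeff (2 * m) Jcal) := by
  have h₁ : (2 * m + 1 + 1) / 2 = m + 1 := by omega
  have h₂ : (2 * m + 1) / 2 = m := by omega
  have h₃ : 2 * m / 2 = m := by omega
  simp only [Jcal, coeff_mk, pow_choose_two_succ q (2 * m), h₁, h₂, h₃]
  ring

theorem coeff_Jcal_two_mul_add_two (m : ℕ) :
    (1 - q ^ (2 * m + 2)) * coeff (2 * m + 2) Jcal =
      q ^ (2 * m + 1) * coeff (2 * m + 1) Jcal := by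
  have h₁ : (2 * m + 2 + 1) / 2 = m + 1 := by omega
  have h₂ : (2 * m + 2) / 2 = m + 1 := by omega
  have h₃ : (2 * m + 1) / 2 = m := by omega
  simp only [Jcal, coeff_mk, pow_choose_two_succ q (2 * m + 1), h₁, h₂, h₃, poch2_succ]
  have := one_sub_q_pow_ne_zero (i := 2 * m + 2) (by omega)
  have := poch2_ne_zero m
  field_simp

theorem coeff_Kcal_two_mul_add_one (m : ℕ) :
    coeff (2 * m + 1) Kcal = q ^ (2 * m + 1) * coeff (2 * m) Kcal := by
  have h₁ : (2 * m + 1) / 2 = m := by omega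
  have h₂ : 2 * m / 2 = m := by omega
  simp only [Kcal, coeff_mk, Nat.mul_succ_div_two_eq_choose, pow_choose_two_succ q (2 * m + 1),
    h₁, h₂]
  ring

theorem coeff_Kcal_two_mul_add_two (m : ℕ) :
    coeff (2 * m + 2) Kcal =
      q ^ (2 * m + 2) * (coeff (2 * m + 1) Kcal + coeff (2 * m + 2) Jcal) := by
  have h₁ : (2 * m + 2) / 2 = m + 1 := by omega
  have h₂ : (2 * m + 1) / 2 = m := by omega
  have h₃ : (2 * m + 2 + 1) / 2 = m + 1 := by omega
  simp only [Kcal, Jcal, coeff_mk, Nat.mul_succ_div_two_eq_choose,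
    pow_choose_two_succ q (2 * m + 2), h₁, h₂, h₃, Finset.sum_range_succ _ (m + 1)]
  ring

theorem coeff_two_mul_add_one_Jcal_add_X_mul_rescale_neg (m : ℕ) :
    coeff (2 * m + 1) (Jcal + X * rescale (-q) Jcal) = 0 := by
  rw [map_add, coeff_succ_X_mul, coeff_rescale, Even.neg_pow (even_two_mul m),
    coeff_Jcal_two_mul_add_one]
  ring

theorem coeff_two_mul_add_two_Jcal_add_X_mul_rescale_neg (m : ℕ) :
    coeff (2 * m + 2) (Jcal + X * rescale (-q) Jcal) =
      q ^ (2 * m + 2) * coeff (2 * m + 2) Jcal := by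
  rw [map_add, coeff_succ_X_mul, coeff_rescale, Odd.neg_pow (odd_two_mul_add_one m)]
  linear_combination coeff_Jcal_two_mul_add_two m

theorem Kcal_sub_X_mul_C_mul_rescale :
    Kcal - X * C q * rescale q Kcal = Jcal + X * rescale (-q) Jcal := by
  refine ext_parity ?_ (fun m => ?_) (fun m => ?_)
  · simp [Kcal, Jcal, poch2]
  · rw [coeff_succ_sub_X_mul_C_mul_rescale, coeff_Kcal_two_mul_add_one,
      coeff_two_mul_add_one_Jcal_add_X_mul_rescale_neg, sub_self]
  · rw [coeff_succ_sub_X_mul_C_mul_rescale, coeff_Kcal_two_mul_add_two,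
      coeff_two_mul_add_two_Jcal_add_X_mul_rescale_neg]
    ring

theorem rescale_Jcal_add_rescale_neg_Jcal :
    rescale q Jcal + rescale (-q) Jcal = 2 * (Jcal + X * rescale (-q) Jcal) := by
  rw [show (2 : K⟦X⟧) = C 2 from rfl]
  refine ext_parity ?_ (fun m => ?_) (fun m => ?_)
  all_goals rw [map_add, coeff_C_mul, coeff_rescale, coeff_rescale]
  · norm_num [Jcal, poch2]
  · rw [coeff_two_mul_add_one_Jcal_add_X_mul_rescale_neg, Odd.neg_pow (odd_two_mul_add_one m)]
    ring
  · rw [coeff_two_mul_add_two_Jcal_add_X_mul_rescale_neg, Even.neg_pow ⟨m + 1, by ring⟩]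
    ring

/-- `𝒦(x) - xq·𝒦(xq) = (𝒥(x) - x·𝒥(xq))/(1-2x) = 𝒥(x) + x·𝒥(-xq)`. -/
theorem stmt10 :
    Kcal - PowerSeries.X * PowerSeries.C q * rescale q Kcal
        = (Jcal - PowerSeries.X * rescale q Jcal) * (1 - 2 * PowerSeries.X)⁻¹ ∧
    Kcal - PowerSeries.X * PowerSeries.C q * rescale q Kcal
        = Jcal + PowerSeries.X * rescale (-q) Jcal := by
  refine ⟨?_, Kcal_sub_X_mul_C_mul_rescale⟩
  rw [Kcal_sub_X_mul_C_mul_rescale, PowerSeries.eq_mul_inv_iff_mul_eq (by simp)]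
  linear_combination X * rescale_Jcal_add_rescale_neg_Jcal

end FC
end
end
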